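/- Let G = (V, E) be a finite simple graph, β ≥ 5 a real, f(β) := 1 − 3/β, and K an integer. Let ℓ : V → ℤ satisfy ℓ(v) ≥ K for all v, let w : E → ℝ≥0 be edge weights with node weights W_v, let E^r := {(u,v) ∈ E : ℓ(u) = ℓ(v) = K}, and let w^r : E → ℝ≥0 be residual edge weights with w^r(e) = 0 for every e ∉ E^r, with residual node weights W^r_v. Assume: (i) W_v ≥ f(β) for every node v with ℓ(v) > K; (a) W_v + W^r_v ≤ 1 for every node v; and (b) every edge (u,v) ∈ E^r has an endpoint x ∈ {u,v} with W_x + W^r_x ≥ 1 − 1/β. Then the edge weights e ↦ w(e) + w^r(e) form a fractional matching of G, and for every fractional matching w′ of G one has Σ_{e ∈ E} w′(e) ≤ (2/f(β)) · Σ_{e ∈ E} (w(e) + w^r(e)); that is, w + w^r is a (2/f(β))-approximate maximum fractional matching of G. -/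

import Mathlib

open Finset

variable {V : Type*}

/-- The weight of a node `v`: the sum of the weights of the edges incident on `v`. -/
noncomputable def nodeWeight [Fintype V] [DecidableEq V] (G : SimpleGraph V)
    [DecidableRel G.Adj] (w : Sym2 V → ℝ) (v : V) : ℝ :=
  ∑ e ∈ G.edgeFinset, if v ∈ e then w e else 0

/-- A fractional matching: nonnegative edge weights with all node weights at most 1. -/
def IsFractionalMatching [Fintype V] [DecidableEq V] (G : SimpleGraph V)
    [DecidableRel G.Adj] (w : Sym2 V → ℝ) : Prop :=
  (∀ e ∈ G.edgeFinset, 0 ≤ w e) ∧ ∀ v, nodeWeight G w v ≤ 1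

/-- A vertex cover: every edge has at least one endpoint in the set. -/
def IsVertexCover (G : SimpleGraph V) (C : Set V) : Prop :=
  ∀ ⦃u v : V⦄, G.Adj u v → u ∈ C ∨ v ∈ C

/-! The nodes whose combined weight `W_v + W^r_v` reaches `f(β)` form a vertex cover: a node above
level `K` does by (i), and an edge with both ends at level `K` has an endpoint of combined weight at
least `1 - 1/β ≥ f(β)` by (b). By LP duality any fractional matching has size at most the size of a
vertex cover `C`, while `f(β) |C| ≤ Σ_{v ∈ C} (W_v + W^r_v) ≤ 2 Σ_e (w e + w^r e)` because every
edge is counted at most twice. -/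

lemma card_filter_mem_sym2_le_two {α : Type*} [DecidableEq α] (C : Finset α) (e : Sym2 α) :
    #{v ∈ C | v ∈ e} ≤ 2 :=
  calc #{v ∈ C | v ∈ e} ≤ #e.toFinset :=
        card_le_card fun v hv => Sym2.mem_toFinset.mpr (mem_filter.mp hv).2
    _ ≤ 2 := by rw [Sym2.card_toFinset]; split_ifs <;> norm_num

section FractionalMatching

variable [Fintype V] [DecidableEq V] (G : SimpleGraph V) [DecidableRel G.Adj]

lemma nodeWeight_nonneg {w : Sym2 V → ℝ} (hw : ∀ e ∈ G.edgeFinset, 0 ≤ w e) (v : V) :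
    0 ≤ nodeWeight G w v :=
  sum_nonneg fun e he => by split_ifs <;> [exact hw e he; rfl]

lemma nodeWeight_add (w w' : Sym2 V → ℝ) (v : V) :
    nodeWeight G (fun e => w e + w' e) v = nodeWeight G w v + nodeWeight G w' v := by
  simp only [nodeWeight, ← sum_add_distrib, ite_add_ite, add_zero]

lemma sum_nodeWeight_eq (C : Finset V) (w : Sym2 V → ℝ) :
    ∑ v ∈ C, nodeWeight G w v = ∑ e ∈ G.edgeFinset, (#{v ∈ C | v ∈ e} : ℝ) * w e := by
  simp only [nodeWeight]
  rw [sum_comm]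
  refine sum_congr rfl fun e _ => ?_
  rw [← sum_filter, sum_const, nsmul_eq_mul]

lemma sum_nodeWeight_le_two_mul_sum {w : Sym2 V → ℝ} (hw : ∀ e ∈ G.edgeFinset, 0 ≤ w e)
    (C : Finset V) : ∑ v ∈ C, nodeWeight G w v ≤ 2 * ∑ e ∈ G.edgeFinset, w e := by
  rw [sum_nodeWeight_eq, mul_sum]
  exact sum_le_sum fun e he => mul_le_mul_of_nonneg_right
    (by exact_mod_cast card_filter_mem_sym2_le_two C e) (hw e he)

lemma one_le_card_filter_mem_of_isVertexCover {C : Finset V} (hC : IsVertexCover G C)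
    {e : Sym2 V} (he : e ∈ G.edgeFinset) : 1 ≤ #{v ∈ C | v ∈ e} := by
  induction e using Sym2.ind with
  | _ u v =>
    obtain hu | hv := hC (G.mem_edgeFinset.mp he)
    · exact card_pos.mpr ⟨u, by simpa using hu⟩
    · exact card_pos.mpr ⟨v, by simpa using hv⟩

theorem sum_le_card_of_isVertexCover {w : Sym2 V → ℝ} (hw : IsFractionalMatching G w)
    {C : Finset V} (hC : IsVertexCover G C) : ∑ e ∈ G.edgeFinset, w e ≤ #C :=
  calc ∑ e ∈ G.edgeFinset, w e ≤ ∑ e ∈ G.edgeFinset, (#{v ∈ C | v ∈ e} : ℝ) * w e :=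
        sum_le_sum fun e he => le_mul_of_one_le_left (hw.1 e he)
          (by exact_mod_cast one_le_card_filter_mem_of_isVertexCover G hC he)
    _ = ∑ v ∈ C, nodeWeight G w v := (sum_nodeWeight_eq G C w).symm
    _ ≤ ∑ _v ∈ C, 1 := sum_le_sum fun v _ => hw.2 v
    _ = #C := by simp

theorem sum_le_div_mul_sum_of_isVertexCover {w : Sym2 V → ℝ} (hw : ∀ e ∈ G.edgeFinset, 0 ≤ w e)
    {f : ℝ} (hf : 0 < f) {C : Finset V} (hC : IsVertexCover G C)
    (hCw : ∀ v ∈ C, f ≤ nodeWeight G w v) {w' : Sym2 V → ℝ} (hw' : IsFractionalMatching G w') :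
    ∑ e ∈ G.edgeFinset, w' e ≤ 2 / f * ∑ e ∈ G.edgeFinset, w e := by
  rw [div_mul_eq_mul_div, le_div_iff₀ hf]
  calc (∑ e ∈ G.edgeFinset, w' e) * f ≤ #C * f :=
        mul_le_mul_of_nonneg_right (sum_le_card_of_isVertexCover G hw' hC) hf.le
    _ = ∑ _v ∈ C, f := by rw [sum_const, nsmul_eq_mul]
    _ ≤ ∑ v ∈ C, nodeWeight G w v := sum_le_sum hCw
    _ ≤ 2 * ∑ e ∈ G.edgeFinset, w e := sum_nodeWeight_le_two_mul_sum G hw C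

end FractionalMatching

theorem stmt6_general [Fintype V] [DecidableEq V] (G : SimpleGraph V) [DecidableRel G.Adj]
    (β : ℝ) (hβ : 5 ≤ β) (K : ℤ) (ℓ : V → ℤ) (hK : ∀ v : V, K ≤ ℓ v)
    (w wr : Sym2 V → ℝ)
    (hw : ∀ e ∈ G.edgeFinset, 0 ≤ w e) (hwr : ∀ e ∈ G.edgeFinset, 0 ≤ wr e)
    -- (i) every node at level above K has weight at least f(β) = 1 - 3/β
    (hi : ∀ v : V, K < ℓ v → 1 - 3 / β ≤ nodeWeight G w v)
    -- (a) W_v + W^r_v ≤ 1 for every node v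
    (ha : ∀ v : V, nodeWeight G w v + nodeWeight G wr v ≤ 1)
    -- (b) every edge of E^r has an endpoint x with W_x + W^r_x ≥ 1 - 1/β
    (hb : ∀ u v : V, G.Adj u v → ℓ u = K → ℓ v = K →
      1 - 1 / β ≤ nodeWeight G w u + nodeWeight G wr u ∨
      1 - 1 / β ≤ nodeWeight G w v + nodeWeight G wr v) :
    IsFractionalMatching G (fun e => w e + wr e) ∧
      ∀ w' : Sym2 V → ℝ, IsFractionalMatching G w' →
        ∑ e ∈ G.edgeFinset, w' e ≤
          (2 / (1 - 3 / β)) * ∑ e ∈ G.edgeFinset, (w e + wr e) := by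
  have hf : 0 < 1 - 3 / β := by rw [sub_pos, div_lt_one (by linarith)]; linarith
  have h13 : 1 / β ≤ 3 / β := div_le_div_of_nonneg_right (by norm_num) (by linarith)
  have hnonneg : ∀ e ∈ G.edgeFinset, 0 ≤ w e + wr e := fun e he => add_nonneg (hw e he) (hwr e he)
  refine ⟨⟨hnonneg, fun v => nodeWeight_add G w wr v ▸ ha v⟩, fun w' hw' => ?_⟩
  let C : Finset V := {v | 1 - 3 / β ≤ nodeWeight G w v + nodeWeight G wr v}
  have mem_C : ∀ v, v ∈ C ↔ 1 - 3 / β ≤ nodeWeight G w v + nodeWeight G wr v := by simp [C]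
  have high_mem_C : ∀ v, K < ℓ v → v ∈ C := fun v hv =>
    (mem_C v).mpr (by linarith [hi v hv, nodeWeight_nonneg G hwr v])
  have hC : IsVertexCover G C := by
    intro u v huv
    rcases (hK u).eq_or_lt with hu | hu
    · rcases (hK v).eq_or_lt with hv | hv
      · rw [mem_coe, mem_coe, mem_C, mem_C]
        rcases hb u v huv hu.symm hv.symm with h | h
        exacts [.inl (by linarith), .inr (by linarith)]
      · exact .inr (high_mem_C v hv)
    · exact .inl (high_mem_C u hu)
  refine sum_le_div_mul_sum_of_isVertexCover G hnonneg hf hC (fun v hv => ?_) hw'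
  rw [nodeWeight_add]
  exact (mem_C v).mp hv

theorem stmt6 [Fintype V] [DecidableEq V] (G : SimpleGraph V) [DecidableRel G.Adj]
    (β : ℝ) (hβ : 5 ≤ β) (K : ℤ) (ℓ : V → ℤ) (hK : ∀ v : V, K ≤ ℓ v)
    (w wr : Sym2 V → ℝ)
    (hw : ∀ e ∈ G.edgeFinset, 0 ≤ w e) (hwr : ∀ e ∈ G.edgeFinset, 0 ≤ wr e)
    -- the residual weights vanish outside E^r = {(u,v) ∈ E : ℓ u = K ∧ ℓ v = K}
    (hwr0 : ∀ u v : V, ¬ (G.Adj u v ∧ ℓ u = K ∧ ℓ v = K) → wr s(u, v) = 0)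
    -- (i) every node at level above K has weight at least f(β) = 1 - 3/β
    (hi : ∀ v : V, K < ℓ v → 1 - 3 / β ≤ nodeWeight G w v)
    -- (a) W_v + W^r_v ≤ 1 for every node v
    (ha : ∀ v : V, nodeWeight G w v + nodeWeight G wr v ≤ 1)
    -- (b) every edge of E^r has an endpoint x with W_x + W^r_x ≥ 1 - 1/β
    (hb : ∀ u v : V, G.Adj u v → ℓ u = K → ℓ v = K →
      1 - 1 / β ≤ nodeWeight G w u + nodeWeight G wr u ∨
      1 - 1 / β ≤ nodeWeight G w v + nodeWeight G wr v) :
    IsFractionalMatching G (fun e => w e + wr e) ∧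
      ∀ w' : Sym2 V → ℝ, IsFractionalMatching G w' →
        ∑ e ∈ G.edgeFinset, w' e ≤
          (2 / (1 - 3 / β)) * ∑ e ∈ G.edgeFinset, (w e + wr e) :=
  stmt6_general G β hβ K ℓ hK w wr hw hwr hi ha hb
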